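/- arXiv:1912.07108 — 7 statements merged into one kernel-verified Lean document; each statement's English description precedes it below -/
import Mathlib

section
/- Let A be a unital Banach algebra and a ∈ A with ν := ‖a² − a‖ < 1/4. Then there exists an idempotent p ∈ A with ‖p − a‖ ≤ (‖a‖ + 1/2)((1 − 4ν)^{−1/2} − 1). Moreover, p can be chosen to commute with every element y ∈ A that commutes with a. -/
/-!
The central binomial series `s(x) = ∑ C(2n,n) xⁿ` is the expansion of `(1 - 4x)^(-1/2)`: the
Chu–Vandermonde identity for `Ring.choose (-1/2)` gives `∑_{i+j=n} C(2i,i) C(2j,j) = 4ⁿ`, hence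
`(1 - 4x) s(x)² = 1` whenever `‖x‖ < 1/4`. For `x = a - a²` we have `1 - 4x = (2a - 1)²`, so
`u = (2a - 1) s(x)` is a square root of `1` commuting with `a`, and `p = (1 + u)/2` is an
idempotent with `p - a = (a - 1/2)(s(x) - 1)`. Termwise, `‖s(x) - 1‖` is bounded by
`s(‖x‖) - 1 = (1 - 4‖x‖)^(-1/2) - 1`.
-/

open Finset Nat

lemma descPochhammer_smeval_neg_half (k : ℕ) :
    (descPochhammer ℤ k).smeval (-(1 / 2) : ℚ) = (-(1 / 4)) ^ k * centralBinom k * k ! := by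
  induction k with
  | zero => simp
  | succ k ih =>
    have hrec : ((k + 1 : ℕ) : ℚ) * centralBinom (k + 1) = 2 * (2 * k + 1) * centralBinom k := by
      exact_mod_cast succ_mul_centralBinom_succ k
    rw [descPochhammer_succ_right, Polynomial.smeval_mul, ih, Polynomial.smeval_sub,
      Polynomial.smeval_X, Polynomial.smeval_natCast, factorial_succ]
    push_cast at hrec ⊢
    linear_combination ((-(1 / 4 : ℚ)) ^ k * k ! / 4) * hrec

lemma Ring.choose_neg_half (k : ℕ) :
    Ring.choose (-(1 / 2) : ℚ) k = (-(1 / 4)) ^ k * centralBinom k := by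
  rw [Ring.choose_eq_smul, descPochhammer_smeval_neg_half, smul_eq_mul]
  field_simp

lemma Ring.choose_neg_one {R : Type*} [Ring R] [BinomialRing R] (k : ℕ) :
    Ring.choose (-1 : R) k = (-1) ^ k := by
  rw [Ring.choose_neg, add_sub_cancel_left, Ring.choose_natCast, choose_self, cast_one,
    Int.negOnePow_def, Units.smul_def, zsmul_one]
  simp

theorem Nat.sum_antidiagonal_centralBinom_mul_centralBinom (n : ℕ) :
    ∑ ij ∈ antidiagonal n, centralBinom ij.1 * centralBinom ij.2 = 4 ^ n := by
  have vandermonde := Ring.add_choose_eq (r := (-(1 / 2) : ℚ)) (s := -(1 / 2)) n (.all _ _)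
  rw [show (-(1 / 2) : ℚ) + -(1 / 2) = -1 by norm_num, Ring.choose_neg_one] at vandermonde
  have hscaled : (-(1 / 4) : ℚ) ^ n *
      ∑ ij ∈ antidiagonal n, (centralBinom ij.1 * centralBinom ij.2 : ℚ) =
      (-(1 / 4)) ^ n * 4 ^ n := by
    rw [← mul_pow, show (-(1 / 4) : ℚ) * 4 = -1 by norm_num, vandermonde, mul_sum]
    refine sum_congr rfl fun ij hij ↦ ?_
    rw [Ring.choose_neg_half, Ring.choose_neg_half, ← mem_antidiagonal.1 hij, pow_add]
    ring
  exact_mod_cast mul_left_cancel₀ (pow_ne_zero _ (by norm_num)) hscaled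

noncomputable def centralBinomSeries {A : Type*} [NormedRing A] (x : A) : A :=
  ∑' n, centralBinom n • x ^ n

lemma Commute.centralBinomSeries_right {A : Type*} [NormedRing A] {x y : A} (h : Commute y x) :
    Commute y (centralBinomSeries x) :=
  .tsum_right y fun n ↦ (h.pow_right n).smul_right _

lemma summable_centralBinom_mul_pow {t : ℝ} (ht₀ : 0 ≤ t) (ht : t < 1 / 4) :
    Summable fun n ↦ (centralBinom n : ℝ) * t ^ n := by
  refine .of_nonneg_of_le (fun n ↦ by positivity) (fun n ↦ ?_)
    (summable_geometric_of_lt_one (by positivity) (by linarith : 4 * t < 1))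
  rw [mul_pow]
  gcongr
  exact_mod_cast centralBinom_le_four_pow n

section NormedRing

variable {A : Type*} [NormedRing A] [NormOneClass A]

lemma norm_centralBinom_smul_pow_le (x : A) (n : ℕ) :
    ‖centralBinom n • x ^ n‖ ≤ centralBinom n * ‖x‖ ^ n :=
  norm_nsmul_le.trans (by gcongr; exact norm_pow_le x n)

lemma summable_norm_centralBinom_smul_pow {x : A} (hx : ‖x‖ < 1 / 4) :
    Summable fun n ↦ ‖centralBinom n • x ^ n‖ :=
  .of_nonneg_of_le (fun _ ↦ norm_nonneg _) (norm_centralBinom_smul_pow_le x)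
    (summable_centralBinom_mul_pow (norm_nonneg x) hx)

variable [CompleteSpace A]

lemma centralBinomSeries_mul_self {x : A} (hx : ‖x‖ < 1 / 4) :
    centralBinomSeries x * centralBinomSeries x = ∑' n, (4 • x) ^ n := by
  have hsum := summable_norm_centralBinom_smul_pow hx
  rw [centralBinomSeries, tsum_mul_tsum_eq_tsum_sum_antidiagonal_of_summable_norm hsum hsum]
  refine tsum_congr fun n ↦ ?_
  calc ∑ ij ∈ antidiagonal n, centralBinom ij.1 • x ^ ij.1 * centralBinom ij.2 • x ^ ij.2
      = ∑ ij ∈ antidiagonal n, (centralBinom ij.1 * centralBinom ij.2) • x ^ n := by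
        refine sum_congr rfl fun ij hij ↦ ?_
        rw [smul_mul_smul_comm, ← pow_add, mem_antidiagonal.1 hij]
    _ = (4 • x) ^ n := by
        rw [← sum_smul, sum_antidiagonal_centralBinom_mul_centralBinom, smul_pow]

lemma one_sub_four_smul_mul_centralBinomSeries_mul_self {x : A} (hx : ‖x‖ < 1 / 4) :
    (1 - 4 • x) * (centralBinomSeries x * centralBinomSeries x) = 1 := by
  rw [centralBinomSeries_mul_self hx]
  refine mul_neg_geom_series _ (norm_nsmul_le.trans_lt ?_)
  push_cast
  linarith

lemma norm_centralBinomSeries_sub_one_le {x : A} (hx : ‖x‖ < 1 / 4) :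
    ‖centralBinomSeries x - 1‖ ≤ centralBinomSeries ‖x‖ - 1 := by
  have hsum := summable_norm_centralBinom_smul_pow hx
  have hsumℝ := summable_centralBinom_mul_pow (norm_nonneg x) hx
  have htail : centralBinomSeries x - 1 = ∑' n, centralBinom (n + 1) • x ^ (n + 1) := by
    rw [centralBinomSeries, hsum.of_norm.tsum_eq_zero_add]
    simp
  have htailℝ : centralBinomSeries ‖x‖ - 1 = ∑' n, (centralBinom (n + 1) : ℝ) * ‖x‖ ^ (n + 1) := by
    simp_rw [centralBinomSeries, nsmul_eq_mul]
    rw [hsumℝ.tsum_eq_zero_add]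
    simp
  rw [htail, htailℝ]
  exact tsum_of_norm_bounded ((summable_nat_add_iff 1).2 hsumℝ).hasSum
    fun n ↦ norm_centralBinom_smul_pow_le x (n + 1)

end NormedRing

lemma centralBinomSeries_eq_rpow {t : ℝ} (ht₀ : 0 ≤ t) (ht : t < 1 / 4) :
    centralBinomSeries t = (1 - 4 * t) ^ (-(1 / 2 : ℝ)) := by
  have hpos : 0 < 1 - 4 * t := by linarith
  have hsq := one_sub_four_smul_mul_centralBinomSeries_mul_self (x := t)
    (by rwa [Real.norm_of_nonneg ht₀])
  have hnonneg : 0 ≤ centralBinomSeries t := tsum_nonneg fun n ↦ by positivity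
  rw [← sq_eq_sq₀ hnonneg (by positivity), ← Real.rpow_mul_natCast hpos.le,
    show -(1 / 2 : ℝ) * (2 : ℕ) = -1 by norm_num, Real.rpow_neg_one]
  rw [nsmul_eq_mul] at hsq
  field_simp
  linear_combination hsq

lemma isIdempotentElem_inv_two_smul_one_add {𝕜 A : Type*} [Field 𝕜] [NeZero (2 : 𝕜)] [Ring A]
    [Algebra 𝕜 A] {u : A} (hu : u * u = 1) : IsIdempotentElem ((2⁻¹ : 𝕜) • (1 + u)) := by
  have hsq : (1 + u) * (1 + u) = (2 : 𝕜) • (1 + u) :=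
    calc (1 + u) * (1 + u) = 1 + u + u + u * u := by noncomm_ring
      _ = (2 : 𝕜) • (1 + u) := by rw [hu, two_smul]; abel
  rw [IsIdempotentElem, smul_mul_smul_comm, hsq, smul_smul, inv_mul_cancel_right₀ two_ne_zero]

/-- If `‖a² − a‖ < 1/4` in a unital Banach algebra, there is an idempotent `p` with
`‖p − a‖ ≤ (‖a‖ + 1/2)((1 − 4ν)^{−1/2} − 1)`, commuting with everything commuting
with `a`. -/
theorem exists_idempotent_near {A : Type*} [NormedRing A] [NormOneClass A]
    [CompleteSpace A] [NormedAlgebra ℂ A]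
    (a : A) (hν : ‖a * a - a‖ < 1 / 4) :
    ∃ p : A, p * p = p ∧
      ‖p - a‖ ≤ (‖a‖ + 1 / 2) * ((1 - 4 * ‖a * a - a‖) ^ (-(1 / 2 : ℝ)) - 1) ∧
      ∀ y : A, y * a = a * y → y * p = p * y := by
  set x := a - a * a
  have hx : ‖x‖ < 1 / 4 := by rwa [norm_sub_rev]
  set s := centralBinomSeries x
  have hs {y : A} (hy : Commute y a) : Commute y s :=
    (hy.sub_right (hy.mul_right hy)).centralBinomSeries_right
  have hv {y : A} (hy : Commute y a) : Commute y (2 • a - 1) :=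
    (hy.smul_right 2).sub_right (.one_right y)
  have hinv : (2 • a - 1) * s * ((2 • a - 1) * s) = 1 := by
    have hsq : (2 • a - 1) * (2 • a - 1) = 1 - 4 • x := by
      simp only [x]
      noncomm_ring
    rw [(hs (hv (.refl a)).symm).symm.mul_mul_mul_comm, hsq,
      one_sub_four_smul_mul_centralBinomSeries_mul_self hx]
  refine ⟨(2⁻¹ : ℂ) • (1 + (2 • a - 1) * s), isIdempotentElem_inv_two_smul_one_add hinv, ?_,
    fun y hy ↦ (((Commute.one_right y).add_right ((hv hy).mul_right (hs hy))).smul_right _).eq⟩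
  have hdiff : (2⁻¹ : ℂ) • (1 + (2 • a - 1) * s) - a = (a - (2⁻¹ : ℂ) • 1) * (s - 1) := by
    simp only [mul_sub, sub_mul, smul_mul_assoc, one_mul, mul_one]
    module
  have hhalf : ‖a - (2⁻¹ : ℂ) • 1‖ ≤ ‖a‖ + 1 / 2 := by
    refine (norm_sub_le _ _).trans_eq ?_
    simp [norm_smul]
  rw [hdiff, ← norm_sub_rev a, ← centralBinomSeries_eq_rpow (norm_nonneg _) hx]
  exact (norm_mul_le _ _).trans
    (mul_le_mul hhalf (norm_centralBinomSeries_sub_one_le hx) (norm_nonneg _) (by positivity))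
end

section
/- Let A be a unital Banach algebra and p, q ∈ A idempotents with ‖p − q‖ < 1. Then p and q are equivalent: there exist a, b ∈ A with p = ab and q = ba. Explicitly, with d = Σ_{n≥0} C(2n,n)(p − q)^{2n}/4ⁿ and c = d(p + q − 1), one has c² = 1, pc = cq, and a = pc, b = cp work. -/
/-! `d` is the binomial series of `(1 - x)^(-1/2)` at `x = (p - q)²`: the convolution identity
`Σ_{k+l=n} C(2k,k) C(2l,l) = 4ⁿ` makes `d²` the geometric series, so `d² (1 - x) = 1`. As `x`
commutes with `p` and `q`, so does `d`, while `s = p + q - 1` satisfies `s² = 1 - x` and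
`p s = p q = s q`. Hence `c = d s` has `c² = d² s² = 1` and `p c = c q`; the factorizations of
`p` and `q` follow from `c² = 1`. -/

open Finset Nat

namespace Nat

theorem two_mul_sum_antidiagonal_fst_mul (n : ℕ) (f : ℕ × ℕ → ℕ) (hf : ∀ kl, f kl.swap = f kl) :
    2 * ∑ kl ∈ antidiagonal n, kl.1 * f kl = n * ∑ kl ∈ antidiagonal n, f kl := by
  have hswap : ∑ kl ∈ antidiagonal n, kl.1 * f kl = ∑ kl ∈ antidiagonal n, kl.2 * f kl := by
    rw [← Finset.Nat.sum_antidiagonal_swap]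
    simp only [Prod.fst_swap, hf]
  rw [two_mul]
  nth_rewrite 2 [hswap]
  rw [← sum_add_distrib, mul_sum]
  refine sum_congr rfl fun kl hkl => ?_
  rw [← add_mul, mem_antidiagonal.mp hkl]

theorem sum_antidiagonal_centralBinom_mul (n : ℕ) :
    ∑ kl ∈ antidiagonal n, centralBinom kl.1 * centralBinom kl.2 = 4 ^ n := by
  set T : ℕ → ℕ := fun m => ∑ kl ∈ antidiagonal m, centralBinom kl.1 * centralBinom kl.2
  set W : ℕ → ℕ := fun m => ∑ kl ∈ antidiagonal m, kl.1 * (centralBinom kl.1 * centralBinom kl.2)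
  have hsymm (m : ℕ) : 2 * W m = m * T m :=
    two_mul_sum_antidiagonal_fst_mul m _ fun kl => Nat.mul_comm _ _
  have hstep (m : ℕ) : W (m + 1) = 4 * W m + 2 * T m := by
    simp only [W, T, Finset.Nat.sum_antidiagonal_succ, zero_mul, zero_add, mul_sum,
      ← sum_add_distrib]
    refine sum_congr rfl fun kl _ => ?_
    rw [← Nat.mul_assoc, succ_mul_centralBinom_succ]
    ring
  induction n with
  | zero => simp
  | succ n ih =>
    have hT : T n = 4 ^ n := ih
    have : (n + 1) * T (n + 1) = (n + 1) * 4 ^ (n + 1) :=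
      calc (n + 1) * T (n + 1) = 2 * W (n + 1) := (hsymm _).symm
        _ = 4 * (2 * W n) + 4 * T n := by rw [hstep]; ring
        _ = (n + 1) * 4 ^ (n + 1) := by rw [hsymm, hT]; ring
    exact Nat.eq_of_mul_eq_mul_left (succ_pos n) this

end Nat

section InvSqrtOneSub

variable (𝕜 : Type*) {A : Type*}

noncomputable def invSqrtOneSub [Field 𝕜] [Ring A] [Algebra 𝕜 A] [TopologicalSpace A] (x : A) :
    A :=
  ∑' n : ℕ, ((centralBinom n : 𝕜) / 4 ^ n) • x ^ n

variable {𝕜}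

theorem Commute.invSqrtOneSub_right [Field 𝕜] [Ring A] [Algebra 𝕜 A] [TopologicalSpace A]
    [IsTopologicalRing A] [T2Space A] {x y : A} (h : Commute y x) :
    Commute y (invSqrtOneSub 𝕜 x) :=
  Commute.tsum_right y fun n => (h.pow_right n).smul_right _

theorem sum_antidiagonal_centralBinom_div_mul [Field 𝕜] [CharZero 𝕜] (n : ℕ) :
    ∑ kl ∈ antidiagonal n,
      (centralBinom kl.1 : 𝕜) / 4 ^ kl.1 * ((centralBinom kl.2 : 𝕜) / 4 ^ kl.2) = 1 := by
  have h (kl) (hkl : kl ∈ antidiagonal n) :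
      (centralBinom kl.1 : 𝕜) / 4 ^ kl.1 * ((centralBinom kl.2 : 𝕜) / 4 ^ kl.2)
        = ((centralBinom kl.1 * centralBinom kl.2 : ℕ) : 𝕜) / 4 ^ n := by
    rw [_root_.div_mul_div_comm, ← pow_add, mem_antidiagonal.mp hkl, Nat.cast_mul]
  rw [sum_congr rfl h, ← sum_div, ← Nat.cast_sum, sum_antidiagonal_centralBinom_mul]
  simp

variable [RCLike 𝕜] [NormedRing A] [NormedAlgebra 𝕜 A]

theorem norm_centralBinom_div_four_pow_le_one (n : ℕ) :
    ‖(centralBinom n : 𝕜) / 4 ^ n‖ ≤ 1 := by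
  rw [norm_div, norm_pow, RCLike.norm_natCast, RCLike.norm_ofNat,
    div_le_one (by positivity)]
  exact_mod_cast centralBinom_le_four_pow n

theorem summable_norm_invSqrtOneSub {x : A} (hx : ‖x‖ < 1) :
    Summable fun n : ℕ => ‖((centralBinom n : 𝕜) / 4 ^ n) • x ^ n‖ := by
  refine (summable_norm_geometric_of_norm_lt_one hx).of_nonneg_of_le (fun n => norm_nonneg _)
    fun n => ?_
  rw [norm_smul]
  exact mul_le_of_le_one_left (norm_nonneg _) (norm_centralBinom_div_four_pow_le_one n)

theorem invSqrtOneSub_mul_self [CompleteSpace A] {x : A} (hx : ‖x‖ < 1) :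
    invSqrtOneSub 𝕜 x * invSqrtOneSub 𝕜 x = ∑' n : ℕ, x ^ n := by
  have hs := summable_norm_invSqrtOneSub (𝕜 := 𝕜) hx
  rw [invSqrtOneSub, tsum_mul_tsum_eq_tsum_sum_antidiagonal_of_summable_norm hs hs]
  refine tsum_congr fun n => ?_
  have h (kl) (hkl : kl ∈ antidiagonal n) :
      ((centralBinom kl.1 : 𝕜) / 4 ^ kl.1) • x ^ kl.1 *
          ((centralBinom kl.2 : 𝕜) / 4 ^ kl.2) • x ^ kl.2
        = ((centralBinom kl.1 : 𝕜) / 4 ^ kl.1 * ((centralBinom kl.2 : 𝕜) / 4 ^ kl.2)) • x ^ n := by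
    rw [smul_mul_smul_comm, ← pow_add, mem_antidiagonal.mp hkl]
  rw [sum_congr rfl h, ← sum_smul, sum_antidiagonal_centralBinom_div_mul, one_smul]

theorem invSqrtOneSub_mul_self_mul_one_sub [CompleteSpace A] {x : A} (hx : ‖x‖ < 1) :
    invSqrtOneSub 𝕜 x * invSqrtOneSub 𝕜 x * (1 - x) = 1 := by
  rw [invSqrtOneSub_mul_self hx, geom_series_mul_neg x hx]

end InvSqrtOneSub

namespace IsIdempotentElem

variable {R : Type*} [Ring R] {p q : R}

theorem commute_sub_mul_self_left (hp : IsIdempotentElem p) (hq : IsIdempotentElem q) :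
    Commute p ((p - q) * (p - q)) := by
  simp only [Commute, SemiconjBy, mul_sub, sub_mul, ← mul_assoc, hp.eq, hq.eq]
  simp only [mul_assoc, hp.eq]
  abel

theorem commute_sub_mul_self_right (hp : IsIdempotentElem p) (hq : IsIdempotentElem q) :
    Commute q ((p - q) * (p - q)) := by
  simpa only [← neg_sub p q, neg_mul_neg] using hq.commute_sub_mul_self_left hp

theorem mul_add_sub_one (hp : IsIdempotentElem p) (hq : IsIdempotentElem q) :
    p * (p + q - 1) = (p + q - 1) * q := by
  simp only [mul_sub, sub_mul, mul_add, add_mul, hp.eq, hq.eq, mul_one, one_mul]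
  abel

theorem add_sub_one_mul_self (hp : IsIdempotentElem p) (hq : IsIdempotentElem q) :
    (p + q - 1) * (p + q - 1) = 1 - (p - q) * (p - q) := by
  simp only [mul_sub, sub_mul, mul_add, add_mul, hp.eq, hq.eq, mul_one, one_mul]
  abel

end IsIdempotentElem

theorem idempotents_close_equiv_general {A : Type*} [NormedRing A]
    [CompleteSpace A] [NormedAlgebra ℂ A]
    (p q : A) (hp : p * p = p) (hq : q * q = q) (hpq : ‖p - q‖ < 1)
    (d c : A)
    (hd : d = ∑' n : ℕ, ((Nat.centralBinom n : ℂ) / 4 ^ n) • ((p - q) * (p - q)) ^ n)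
    (hc : c = d * (p + q - 1)) :
    c * c = 1 ∧ p * c = c * q ∧
    p = (p * c) * (c * p) ∧ q = (c * p) * (p * c) := by
  replace hd : d = invSqrtOneSub ℂ ((p - q) * (p - q)) := hd
  have hp' : IsIdempotentElem p := hp
  have hq' : IsIdempotentElem q := hq
  have hx : ‖(p - q) * (p - q)‖ < 1 :=
    (norm_mul_le _ _).trans_lt (by nlinarith [norm_nonneg (p - q)])
  have hpd : Commute p d := hd ▸ (hp'.commute_sub_mul_self_left hq').invSqrtOneSub_right
  have hqd : Commute q d := hd ▸ (hp'.commute_sub_mul_self_right hq').invSqrtOneSub_right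
  have hsd : Commute (p + q - 1) d := (hpd.add_left hqd).sub_left (Commute.one_left d)
  have hcc : c * c = 1 :=
    calc c * c = d * d * ((p + q - 1) * (p + q - 1)) := by rw [hc, hsd.mul_mul_mul_comm]
      _ = 1 := by rw [hp'.add_sub_one_mul_self hq', hd, invSqrtOneSub_mul_self_mul_one_sub hx]
  have hpc : p * c = c * q := by
    rw [hc, ← mul_assoc, hpd.eq, mul_assoc, hp'.mul_add_sub_one hq', mul_assoc]
  refine ⟨hcc, hpc, ?_, ?_⟩
  · rw [mul_assoc, ← mul_assoc c c p, hcc, one_mul, hp]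
  · rw [mul_assoc, ← mul_assoc p p c, hp, hpc, ← mul_assoc, hcc, one_mul]

/-- Idempotents at distance less than one are equivalent; explicitly, with
`d = Σ C(2n,n)(p−q)^{2n}/4ⁿ` and `c = d(p+q−1)` one has `c² = 1`, `pc = cq`,
and `p = (pc)(cp)`, `q = (cp)(pc)`. -/
theorem idempotents_close_equiv {A : Type*} [NormedRing A] [NormOneClass A]
    [CompleteSpace A] [NormedAlgebra ℂ A]
    (p q : A) (hp : p * p = p) (hq : q * q = q) (hpq : ‖p - q‖ < 1)
    (d c : A)
    (hd : d = ∑' n : ℕ, ((Nat.centralBinom n : ℂ) / 4 ^ n) • ((p - q) * (p - q)) ^ n)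
    (hc : c = d * (p + q - 1)) :
    c * c = 1 ∧ p * c = c * q ∧
    p = (p * c) * (c * p) ∧ q = (c * p) * (p * c) :=
  idempotents_close_equiv_general p q hp hq hpq d c hd hc
end

section
/- Let S be a monoid with identity e and let ω: S → [1, ∞) be a weight (ω(st) ≤ ω(s)ω(t), ω(e) = 1). If p ∈ ℓ¹(S, ω) is a nonzero idempotent under convolution with p ≠ δ_e, then ‖p‖_ω ≥ (1/2)·inf{ω(s) : s ∈ S, s ≠ e}. -/
/-!
Put `a = p 1` and `Q = ∑_{s ≠ 1} ‖p s‖`. A nonzero idempotent of `ℓ¹(S)` has norm at least `1`,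
since `‖p‖ = ‖p ∗ p‖ ≤ ‖p‖²`; applied to `p` and to the complementary idempotent `δ₁ - p` this
gives `1 ≤ ‖a‖ + Q` and `1 ≤ ‖1 - a‖ + Q`. At the identity, `(1, 1)` is the only pair `(s, t)` with
`s * t = 1` in which `s = 1` or `t = 1`, so `p ∗ p = p` read at `1` gives `‖a - a²‖ ≤ Q²`. If
`Q < 1/2`, then `(1 - Q)² ≤ ‖a‖ ‖1 - a‖ ≤ Q²`, which is absurd. Hence `Q ≥ 1/2`, and
`‖p‖_ω ≥ (inf_{s ≠ 1} ω s) · Q`.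
-/

open Function DiscreteConvolution

section Update

variable {ι E : Type*} [DecidableEq ι] [SeminormedAddCommGroup E] {f : ι → E}

lemma Summable.norm_update_zero (hf : Summable (‖f ·‖)) (b : ι) :
    Summable (‖Function.update f b 0 ·‖) :=
  hf.of_nonneg_of_le (fun _ => norm_nonneg _) fun i => by by_cases h : i = b <;> simp [h]

lemma tsum_norm_eq_norm_add_tsum_norm_update (hf : Summable (‖f ·‖)) (b : ι) :
    ∑' i, ‖f i‖ = ‖f b‖ + ∑' i, ‖update f b 0 i‖ := by
  rw [hf.tsum_eq_add_tsum_ite b]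
  congr 1
  exact tsum_congr fun i => by by_cases h : i = b <;> simp [h]

lemma sInf_mul_tsum_norm_update_le {ω : ι → ℝ} (hω : ∀ i, 0 ≤ ω i) (hf : Summable (‖f ·‖))
    (hfω : Summable fun i => ‖f i‖ * ω i) (b : ι) :
    sInf {x | ∃ i, i ≠ b ∧ ω i = x} * ∑' i, ‖update f b 0 i‖ ≤ ∑' i, ‖f i‖ * ω i := by
  set I := sInf {x | ∃ i, i ≠ b ∧ ω i = x}
  rw [← tsum_mul_left]
  refine ((hf.norm_update_zero b).mul_left I).tsum_le_tsum (fun i => ?_) hfω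
  by_cases h : i = b
  · simpa [h] using mul_nonneg (norm_nonneg (f b)) (hω b)
  · have hI : I ≤ ω i := csInf_le ⟨0, by rintro _ ⟨j, -, rfl⟩; exact hω j⟩ ⟨i, h, rfl⟩
    rw [update_of_ne h, mul_comm]
    exact mul_le_mul_of_nonneg_left hI (norm_nonneg _)

end Update

lemma one_half_le_of_norm_sub_mul_self_le {R : Type*} [NormedDivisionRing R] {a : R} {Q : ℝ}
    (ha : 1 ≤ ‖a‖ + Q) (h1a : 1 ≤ ‖1 - a‖ + Q) (haa : ‖a - a * a‖ ≤ Q * Q) : 1 / 2 ≤ Q := by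
  have hmul : ‖a‖ * ‖1 - a‖ = ‖a - a * a‖ := by rw [← norm_mul, mul_sub, mul_one]
  by_contra! hQ
  nlinarith [mul_le_mul (show 1 - Q ≤ ‖a‖ by linarith) (show 1 - Q ≤ ‖1 - a‖ by linarith)
    (by linarith) (norm_nonneg a)]

lemma summable_norm_indicator_one {S R : Type*} [Monoid S] [SeminormedRing R] :
    Summable (‖Set.indicator {(1 : S)} (fun _ => (1 : R)) ·‖) :=
  summable_of_ne_finset_zero (s := {1}) fun s hs => by simp_all

namespace DiscreteConvolution

section Sub

variable {M S E E' F : Type*} [Monoid M] [CommSemiring S] [AddCommGroup E] [AddCommGroup E']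
  [AddCommGroup F] [Module S E] [Module S E'] [Module S F] [TopologicalSpace F]
  [IsTopologicalAddGroup F] [T2Space F] {L : E →ₗ[S] E' →ₗ[S] F} {x : M}

lemma ConvolutionExistsAt.distrib_sub {f : M → E} {g g' : M → E'}
    (hfg : ConvolutionExistsAt L f g x) (hfg' : ConvolutionExistsAt L f g' x) :
    (f ⋆[L] (g - g')) x = (f ⋆[L] g) x - (f ⋆[L] g') x := by
  simpa [convolution] using hfg.tsum_sub hfg'

lemma ConvolutionExistsAt.sub_distrib {f f' : M → E} {g : M → E'}
    (hfg : ConvolutionExistsAt L f g x) (hf'g : ConvolutionExistsAt L f' g x) :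
    ((f - f') ⋆[L] g) x = (f ⋆[L] g) x - (f' ⋆[L] g) x := by
  simpa [convolution] using hfg.tsum_sub hf'g

end Sub

section NormedCommRing

variable {S R : Type*} [Monoid S] [NormedCommRing R] {f g : S → R}

local notation:67 f:68 " ∗ " g:67 => f ⋆[LinearMap.mul R R] g

lemma tsum_mulFiber_eq {E : Type*} [AddCommMonoid E] [TopologicalSpace E]
    (F : S × S → E) (r : S) :
    ∑' x : mulFiber r, F x = ∑' x : {x : S × S // x.1 * x.2 = r}, F x :=
  (Equiv.subtypeEquivRight fun _ => mem_mulFiber).tsum_eq fun x => F x.1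

lemma convolution_mul_apply (f g : S → R) (r : S) :
    (f ∗ g) r = ∑' x : {x : S × S // x.1 * x.2 = r}, f x.1.1 * g x.1.2 := by
  simp only [convolution, LinearMap.mul_apply']
  exact tsum_mulFiber_eq (fun x => f x.1 * g x.2) r

lemma mulFiber_eq_preimage (r : S) :
    mulFiber r = (fun x : S × S => x.1 * x.2) ⁻¹' {r} := by
  ext; simp [mem_mulFiber]

lemma norm_convolution_mul_le (hf : Summable (‖f ·‖)) (hg : Summable (‖g ·‖)) (r : S) :
    ‖(f ∗ g) r‖ ≤ ∑' x : mulFiber r, ‖f x.1.1‖ * ‖g x.1.2‖ :=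
  tsum_of_norm_bounded (((hf.mul_of_nonneg hg (fun _ => norm_nonneg _)
    fun _ => norm_nonneg _).subtype _).hasSum) fun _ => norm_mul_le _ _

lemma norm_convolution_mul_apply_le (hf : Summable (‖f ·‖)) (hg : Summable (‖g ·‖)) (r : S) :
    ‖(f ∗ g) r‖ ≤ (∑' s, ‖f s‖) * ∑' s, ‖g s‖ := by
  have hprod := hf.mul_of_nonneg hg (fun _ => norm_nonneg _) fun _ => norm_nonneg _
  refine (norm_convolution_mul_le hf hg r).trans ?_
  rw [hf.tsum_mul_tsum hg hprod]
  exact hprod.tsum_subtype_le _ _ fun _ => mul_nonneg (norm_nonneg _) (norm_nonneg _)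

lemma tsum_norm_convolution_mul_le (hf : Summable (‖f ·‖)) (hg : Summable (‖g ·‖)) :
    ∑' r, ‖(f ∗ g) r‖ ≤ (∑' s, ‖f s‖) * ∑' s, ‖g s‖ := by
  have hprod := hf.mul_of_nonneg hg (fun _ => norm_nonneg _) fun _ => norm_nonneg _
  have hfiber : HasSum (fun r => ∑' x : mulFiber r, ‖f x.1.1‖ * ‖g x.1.2‖)
      ((∑' s, ‖f s‖) * ∑' s, ‖g s‖) := by
    have h := hprod.hasSum.tsum_fiberwise fun x => x.1 * x.2
    rw [← hf.tsum_mul_tsum hg hprod] at h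
    refine (congrArg (HasSum · _) (funext fun r => ?_)).mpr h
    rw [mulFiber_eq_preimage]
  have hnorm : Summable fun r => ‖(f ∗ g) r‖ :=
    hfiber.summable.of_nonneg_of_le (fun _ => norm_nonneg _) (norm_convolution_mul_le hf hg)
  exact hasSum_le (norm_convolution_mul_le hf hg) hnorm.hasSum hfiber

lemma one_le_tsum_norm_of_convolution_self (hf : Summable (‖f ·‖)) (hff : f ∗ f = f)
    (hf0 : f ≠ 0) : 1 ≤ ∑' s, ‖f s‖ := by
  have hle : ∑' s, ‖f s‖ ≤ (∑' s, ‖f s‖) * ∑' s, ‖f s‖ := by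
    simpa only [hff] using tsum_norm_convolution_mul_le hf hf
  obtain ⟨s, hs⟩ := Function.ne_iff.mp hf0
  have hpos : 0 < ∑' s, ‖f s‖ :=
    (norm_pos_iff.mpr hs).trans_le (hf.le_tsum s fun _ _ => norm_nonneg _)
  nlinarith

variable [CompleteSpace R]

lemma convolutionExistsAt_mul (hf : Summable (‖f ·‖)) (hg : Summable (‖g ·‖)) (r : S) :
    ConvolutionExistsAt (LinearMap.mul R R) f g r := by
  simp only [ConvolutionExistsAt, LinearMap.mul_apply']
  exact (summable_mul_of_summable_norm hf hg).subtype (mulFiber r)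

lemma convolution_self_indicator_sub_eq (hf : Summable (‖f ·‖)) (hff : f ∗ f = f) :
    (Set.indicator {1} (fun _ => 1) - f) ∗ (Set.indicator {1} (fun _ => 1) - f) =
      Set.indicator {1} (fun _ => 1) - f := by
  set δ : S → R := Set.indicator {1} fun _ => 1
  have hδ : Summable (‖δ ·‖) := summable_norm_indicator_one
  have hδf : Summable (‖(δ - f) ·‖) :=
    (hδ.add hf).of_nonneg_of_le (fun _ => norm_nonneg _) fun _ => norm_sub_le _ _
  ext r
  rw [(convolutionExistsAt_mul hδ hδf r).sub_distrib (convolutionExistsAt_mul hf hδf r),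
    (convolutionExistsAt_mul hf hδ r).distrib_sub (convolutionExistsAt_mul hf hf r), hff,
    convolution_indicator_one_left _ _ _ (by simp), convolution_indicator_one_right _ _ _ (by simp)]
  simp

lemma convolution_self_apply_one [DecidableEq S] (hf : Summable (‖f ·‖)) :
    (f ∗ f) 1 = f 1 * f 1 + (update f 1 0 ∗ update f 1 0) 1 := by
  have hsplit := (convolutionExistsAt_mul hf hf 1).tsum_eq_add_tsum_ite ⟨(1, 1), mulFiber_one_mem⟩
  simp only [convolution, LinearMap.mul_apply'] at hsplit ⊢
  rw [hsplit]
  congr 1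
  refine tsum_congr fun x => ?_
  have hx : x.1.1 = 1 ↔ x.1.2 = 1 := by
    have := mem_mulFiber.mp x.2
    constructor <;> intro h <;> simp_all
  by_cases h : x.1.1 = 1
  · have : x = ⟨(1, 1), mulFiber_one_mem⟩ := Subtype.ext (Prod.ext h (hx.mp h))
    simp [this]
  · have : x ≠ ⟨(1, 1), mulFiber_one_mem⟩ := fun hx1 => h (by rw [hx1])
    simp [this, h, hx.not.mp h]

end NormedCommRing

lemma one_half_le_tsum_norm_update_of_convolution_self {S 𝕜 : Type*} [Monoid S] [DecidableEq S]
    [NormedField 𝕜] [CompleteSpace 𝕜] {p : S → 𝕜} (hp : Summable (‖p ·‖))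
    (hpp : p ⋆[LinearMap.mul 𝕜 𝕜] p = p) (hp0 : p ≠ 0)
    (hpδ : p ≠ Set.indicator {1} fun _ => 1) :
    1 / 2 ≤ ∑' s, ‖update p 1 0 s‖ := by
  set δ : S → 𝕜 := Set.indicator {1} fun _ => 1
  set Q := ∑' s, ‖update p 1 0 s‖
  have hp1 : 1 ≤ ‖p 1‖ + Q := by
    rw [← tsum_norm_eq_norm_add_tsum_norm_update hp]
    exact one_le_tsum_norm_of_convolution_self hp hpp hp0
  have hδp1 : 1 ≤ ‖1 - p 1‖ + Q := by
    have hδp : Summable (‖(δ - p) ·‖) :=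
      (summable_norm_indicator_one.add hp).of_nonneg_of_le (fun _ => norm_nonneg _)
        fun _ => norm_sub_le _ _
    have hupdate : ∑' s, ‖update (δ - p) 1 0 s‖ = Q :=
      tsum_congr fun s => by by_cases h : s = 1 <;> simp [δ, h]
    have h := one_le_tsum_norm_of_convolution_self hδp (convolution_self_indicator_sub_eq hp hpp)
      (sub_ne_zero.mpr hpδ.symm)
    rw [tsum_norm_eq_norm_add_tsum_norm_update hδp 1, hupdate] at h
    simpa [δ] using h
  have hcoeff : ‖p 1 - p 1 * p 1‖ ≤ Q * Q := by
    have h := convolution_self_apply_one hp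
    rw [hpp] at h
    rw [sub_eq_of_eq_add' h]
    exact norm_convolution_mul_apply_le (hp.norm_update_zero 1) (hp.norm_update_zero 1) 1
  exact one_half_le_of_norm_sub_mul_self_le hp1 hδp1 hcoeff

end DiscreteConvolution

theorem weighted_l1_idempotent_norm_lower_bound_general
    {S : Type*} [Monoid S] [DecidableEq S]
    (ω : S → ℝ) (hω1 : ∀ s, 1 ≤ ω s)
    (p : S → ℂ) (hsum : Summable fun s => ‖p s‖ * ω s)
    (hidem : ∀ r : S,
      p r = ∑' x : {x : S × S // x.1 * x.2 = r}, p x.1.1 * p x.1.2)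
    (hp0 : p ≠ 0)
    (hpδ : p ≠ fun s => if s = 1 then (1 : ℂ) else 0) :
    (1 / 2) * sInf {x : ℝ | ∃ s : S, s ≠ 1 ∧ ω s = x} ≤ ∑' s, ‖p s‖ * ω s := by
  have hω : ∀ s, 0 ≤ ω s := fun s => zero_le_one.trans (hω1 s)
  have hp : Summable (‖p ·‖) := hsum.of_nonneg_of_le (fun _ => norm_nonneg _)
    fun s => le_mul_of_one_le_right (norm_nonneg _) (hω1 s)
  have hpp : p ⋆[LinearMap.mul ℂ ℂ] p = p :=
    funext fun r => (convolution_mul_apply p p r).trans (hidem r).symm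
  have hδ : (Set.indicator {1} fun _ => 1) = fun s : S => if s = 1 then (1 : ℂ) else 0 := by
    ext s; simp [Set.indicator_apply]
  have hQ := one_half_le_tsum_norm_update_of_convolution_self hp hpp hp0 (hδ ▸ hpδ)
  have hI : 0 ≤ sInf {x : ℝ | ∃ s : S, s ≠ 1 ∧ ω s = x} :=
    Real.sInf_nonneg fun _ ⟨s, _, hs⟩ => hs ▸ hω s
  calc (1 / 2) * sInf {x : ℝ | ∃ s : S, s ≠ 1 ∧ ω s = x}
      ≤ sInf {x : ℝ | ∃ s : S, s ≠ 1 ∧ ω s = x} * ∑' s, ‖update p 1 0 s‖ := by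
        rw [mul_comm]; exact mul_le_mul_of_nonneg_left hQ hI
    _ ≤ ∑' s, ‖p s‖ * ω s := sInf_mul_tsum_norm_update_le hω hp hsum 1

/-- A nonzero idempotent `p ≠ δ_e` in a weighted semigroup algebra `ℓ¹(S, ω)`
(with `ω ≥ 1`) satisfies `‖p‖_ω ≥ (1/2) inf{ω(s) : s ≠ e}`. -/
theorem weighted_l1_idempotent_norm_lower_bound
    {S : Type*} [Monoid S] [DecidableEq S]
    (ω : S → ℝ) (hω1 : ∀ s, 1 ≤ ω s) (hωmul : ∀ s t, ω (s * t) ≤ ω s * ω t)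
    (hωe : ω 1 = 1)
    (p : S → ℂ) (hsum : Summable fun s => ‖p s‖ * ω s)
    (hidem : ∀ r : S,
      p r = ∑' x : {x : S × S // x.1 * x.2 = r}, p x.1.1 * p x.1.2)
    (hp0 : p ≠ 0)
    (hpδ : p ≠ fun s => if s = 1 then (1 : ℂ) else 0) :
    (1 / 2) * sInf {x : ℝ | ∃ s : S, s ≠ 1 ∧ ω s = x} ≤ ∑' s, ‖p s‖ * ω s :=
  weighted_l1_idempotent_norm_lower_bound_general ω hω1 p hsum hidem hp0 hpδ
end

section
/- Let S = {s₀, s₁, s₂, ...} be a countable semigroup of idempotents with multiplication sₙsₘ = s_{max(n,m)}. Then f ∈ ℓ¹(S) is an idempotent under convolution if and only if: f(sₙ) ∈ {−1, 0, 1} for all n, f(sₙ) = 0 for all sufficiently large n, and Σ_{n=0}^{m} f(sₙ) ∈ {0, 1} for every m ≥ 0. -/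
/-!
Writing `P m = ∑_{n < m} f n`, the pairs with `max = t` fill the square `[0, t]²` minus the
square `[0, t)²`, so `(f ∗ f) t = P (t + 1) ^ 2 - P t ^ 2`, while `f t = P (t + 1) - P t`.
Once `P t` is idempotent, `f ∗ f = f` at `t` therefore says exactly that `P (t + 1)` is
idempotent; since `P 0 = 0`, `f` is idempotent iff every partial sum is `0` or `1`. The values
`f n` are then differences of two elements of `{0, 1}`, and summability forces them to vanish
eventually.
-/

open Finset

lemma tsum_max_eq_sq_sub_sq {R : Type*} [CommRing R] [TopologicalSpace R] (f : ℕ → R) (t : ℕ) :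
    ∑' x : {x : ℕ × ℕ // max x.1 x.2 = t}, f x.1.1 * f x.1.2 =
      (∑ n ∈ range (t + 1), f n) ^ 2 - (∑ n ∈ range t, f n) ^ 2 := by
  have hmem : ∀ x : ℕ × ℕ,
      max x.1 x.2 = t ↔ x ∈ range (t + 1) ×ˢ range (t + 1) \ range t ×ˢ range t := by
    intro x
    simp only [mem_sdiff, mem_product, mem_range]
    omega
  have hsub : range t ×ˢ range t ⊆ range (t + 1) ×ˢ range (t + 1) :=
    product_subset_product (range_subset_range.2 t.le_succ) (range_subset_range.2 t.le_succ)
  refine ((Equiv.subtypeEquivRight hmem).tsum_eq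
    fun x => f (x : ℕ × ℕ).1 * f (x : ℕ × ℕ).2).trans ?_
  rw [Finset.tsum_subtype _ fun x : ℕ × ℕ => f x.1 * f x.2, sum_sdiff_eq_sub hsub,
    sum_product, sum_product, sq, sq, sum_mul_sum, sum_mul_sum]

lemma sub_eq_sq_sub_sq_iff {R : Type*} [CommRing R] {a b : R} (hb : IsIdempotentElem b) :
    a - b = a ^ 2 - b ^ 2 ↔ IsIdempotentElem a := by
  rw [sq, sq, hb.eq, sub_left_inj, IsIdempotentElem, eq_comm]

theorem conv_self_eq_iff_forall_isIdempotentElem_sum_range {R : Type*} [CommRing R]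
    [TopologicalSpace R] (f : ℕ → R) :
    (∀ t : ℕ, f t = ∑' x : {x : ℕ × ℕ // max x.1 x.2 = t}, f x.1.1 * f x.1.2) ↔
      ∀ m, IsIdempotentElem (∑ n ∈ range m, f n) := by
  have hf : ∀ t, f t = (∑ n ∈ range (t + 1), f n) - ∑ n ∈ range t, f n :=
    fun t => (sum_range_succ_sub_sum f).symm
  simp only [tsum_max_eq_sq_sub_sq]
  constructor
  · intro h m
    induction m with
    | zero => simpa using IsIdempotentElem.zero
    | succ m ih => exact (sub_eq_sq_sub_sq_iff ih).1 ((hf m).symm.trans (h m))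
  · intro h t
    rw [hf t]
    exact (sub_eq_sq_sub_sq_iff (h t)).2 (h (t + 1))

lemma exists_forall_ge_eq_zero_of_summable_norm {E : Type*} [SeminormedAddCommGroup E]
    {f : ℕ → E} (hsum : Summable fun n => ‖f n‖) (hf : ∀ n, f n = 0 ∨ 1 ≤ ‖f n‖) :
    ∃ N, ∀ n ≥ N, f n = 0 := by
  obtain ⟨N, hN⟩ := Filter.eventually_atTop.1 (hsum.tendsto_atTop_zero.eventually_lt_const one_pos)
  exact ⟨N, fun n hn => (hf n).resolve_right (hN n hn).not_ge⟩

/-- Characterisation of the idempotents of `ℓ¹(ℕ, max)` (the semigroup of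
idempotents `sₙ sₘ = s_{max(n,m)}`). -/
theorem l1_max_semigroup_idempotents (f : ℕ → ℂ) (hsum : Summable fun n => ‖f n‖) :
    (∀ t : ℕ, f t = ∑' x : {x : ℕ × ℕ // max x.1 x.2 = t}, f x.1.1 * f x.1.2) ↔
      ((∀ n, f n = -1 ∨ f n = 0 ∨ f n = 1) ∧
        (∃ N, ∀ n ≥ N, f n = 0) ∧
        (∀ m, (∑ n ∈ Finset.range (m + 1), f n) = 0 ∨
          (∑ n ∈ Finset.range (m + 1), f n) = 1)) := by
  have hsums : (∀ m, IsIdempotentElem (∑ n ∈ range m, f n)) ↔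
      ∀ m, (∑ n ∈ range (m + 1), f n) = 0 ∨ (∑ n ∈ range (m + 1), f n) = 1 := by
    simp only [IsIdempotentElem.iff_eq_zero_or_one]
    refine ⟨fun h m => h (m + 1), fun h m => ?_⟩
    cases m with
    | zero => simp
    | succ m => exact h m
  rw [conv_self_eq_iff_forall_isIdempotentElem_sum_range, hsums.symm]
  refine ⟨fun h => ?_, fun h => h.2.2⟩
  have hvals : ∀ n, f n = -1 ∨ f n = 0 ∨ f n = 1 := by
    intro n
    rw [← sum_range_succ_sub_sum f]
    rcases IsIdempotentElem.iff_eq_zero_or_one.1 (h (n + 1)) with h₁ | h₁ <;>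
      rcases IsIdempotentElem.iff_eq_zero_or_one.1 (h n) with h₀ | h₀ <;> simp [h₀, h₁]
  refine ⟨hvals, exists_forall_ge_eq_zero_of_summable_norm hsum fun n => ?_, h⟩
  rcases hvals n with hn | hn | hn <;> simp [hn]
end

section
/- Let BC be the bicyclic monoid and ωₙ the weight with ωₙ(e) = 1 and ωₙ(s) = n for s ≠ e. Then the Banach algebra Aₙ = (ℓ¹(BC, ωₙ), ∗) is Dedekind-infinite: h = δ_q ∗ δ_p is an idempotent with h ∼ δ_e and h ≠ δ_e. Moreover every idempotent h ∈ Aₙ with h ∼ δ_e and h ≠ δ_e satisfies ‖h‖_{ωₙ} ≥ n/2. -/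
/-- The defining relation of the bicyclic monoid `BC = ⟨p, q : pq = e⟩`. -/
def bicyclicRel : FreeMonoid (Fin 2) → FreeMonoid (Fin 2) → Prop :=
  fun x y => x = FreeMonoid.of 0 * FreeMonoid.of 1 ∧ y = 1

/-- The bicyclic monoid. -/
def BC := PresentedMonoid bicyclicRel

instance : Monoid BC := by unfold BC; infer_instance

/-- The generator `p` of `BC`. -/
def BC.p : BC := PresentedMonoid.of bicyclicRel 0

/-- The generator `q` of `BC`. -/
def BC.q : BC := PresentedMonoid.of bicyclicRel 1

open Classical in
/-- The point mass `δ_x`. -/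
noncomputable def delta (x : BC) : BC → ℂ := fun s => if s = x then 1 else 0

/-- The convolution product on `ℓ¹(BC)`. -/
noncomputable def conv (f g : BC → ℂ) : BC → ℂ :=
  fun r => ∑' x : {x : BC × BC // x.1 * x.2 = r}, f x.1.1 * g x.1.2

/-- Membership in `ℓ¹(BC, ω)`. -/
def MemL1 (ω : BC → ℝ) (f : BC → ℂ) : Prop := Summable fun s => ‖f s‖ * ω s

/-- The weighted `ℓ¹` norm. -/
noncomputable def wnorm (ω : BC → ℝ) (f : BC → ℂ) : ℝ := ∑' s, ‖f s‖ * ω s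

/-!
The augmentation `f ↦ ∑ f(s)` is multiplicative for `∗`, so `h = b ∗ a` with `a ∗ b = δ_e` has
total sum `1`. Then `g = h - δ_e` satisfies `g ∗ g = -g` and `g ≠ 0`, so submultiplicativity of
the `ℓ¹` norm gives `‖g‖₁ ≥ 1`. Writing `T = ∑_{s ≠ e} |h(s)|`, the total sum gives
`|h(e) - 1| ≤ T`, hence `1 ≤ ‖g‖₁ = |h(e) - 1| + T ≤ 2T` and `‖h‖_{ωₙ} ≥ nT ≥ n/2`.
For the witness, `qp ≠ e` because `q` and `p` act on `ℕ` as successor and predecessor.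
-/

section Summation

variable {β E : Type*}

theorem tsum_eq_add_tsum_compl_singleton [AddCommGroup E] [UniformSpace E] [IsUniformAddGroup E]
    [CompleteSpace E] [T2Space E] {f : β → E} (hf : Summable f) (a : β) :
    ∑' s, f s = f a + ∑' s : ({a}ᶜ : Set β), f s := by
  rw [← hf.tsum_subtype_add_tsum_subtype_compl {a}, tsum_singleton]

theorem norm_tsum_sub_le_tsum_compl_singleton [NormedAddCommGroup E] [CompleteSpace E]
    {f : β → E} (hf : Summable (‖f ·‖)) (a : β) :
    ‖∑' s, f s - f a‖ ≤ ∑' s : ({a}ᶜ : Set β), ‖f s‖ := by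
  rw [tsum_eq_add_tsum_compl_singleton hf.of_norm a, add_sub_cancel_left]
  exact norm_tsum_le_tsum_norm (hf.subtype _)

theorem summable_norm_sub [SeminormedAddCommGroup E] {f g : β → E} (hf : Summable (‖f ·‖))
    (hg : Summable (‖g ·‖)) : Summable (‖(f - g) ·‖) :=
  (hf.add hg).of_nonneg_of_le (fun _ => norm_nonneg _) fun _ => norm_sub_le _ _

end Summation

theorem BC.p_mul_q : BC.p * BC.q = 1 :=
  PresentedMonoid.mk_eq_mk_of_rel ⟨rfl, rfl⟩

theorem BC.isIdempotentElem_q_mul_p : IsIdempotentElem (BC.q * BC.p) := by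
  rw [IsIdempotentElem, mul_assoc, ← mul_assoc BC.p, BC.p_mul_q, one_mul]

def BC.toEnd : BC →* Function.End ℕ :=
  PresentedMonoid.lift (M := Function.End ℕ) ![Nat.pred, Nat.succ]
    (by rintro _ _ ⟨rfl, rfl⟩; rw [map_mul, map_one]; rfl)

theorem BC.q_mul_p_ne_one : BC.q * BC.p ≠ 1 := by
  intro h
  have h0 := congr_arg (fun x => BC.toEnd x 0) h
  rw [map_mul, map_one] at h0
  exact Nat.one_ne_zero h0

section Convolution

variable {f g : BC → ℂ}

theorem summable_conv_fiber (hf : Summable (‖f ·‖)) (hg : Summable (‖g ·‖)) (r : BC) :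
    Summable fun x : {x : BC × BC // x.1 * x.2 = r} => f x.1.1 * g x.1.2 :=
  (summable_mul_of_summable_norm hf hg).subtype _

-- `conv f g r` is by definition the sum over the fibre `(· * ·) ⁻¹' {r}`, so the
-- fiberwise decomposition of the product sum applies verbatim.
theorem hasSum_conv (hf : Summable (‖f ·‖)) (hg : Summable (‖g ·‖)) :
    HasSum (conv f g) ((∑' s, f s) * ∑' s, g s) := by
  rw [tsum_mul_tsum_of_summable_norm hf hg]
  exact (summable_mul_of_summable_norm hf hg).hasSum.tsum_fiberwise fun x : BC × BC => x.1 * x.2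

theorem tsum_conv_comm (hf : Summable (‖f ·‖)) (hg : Summable (‖g ·‖)) :
    ∑' r, conv f g r = ∑' r, conv g f r := by
  rw [(hasSum_conv hf hg).tsum_eq, (hasSum_conv hg hf).tsum_eq, mul_comm]

theorem hasSum_tsum_conv_fiber_norm (hf : Summable (‖f ·‖)) (hg : Summable (‖g ·‖)) :
    HasSum (fun r => ∑' x : {x : BC × BC // x.1 * x.2 = r}, ‖f x.1.1‖ * ‖g x.1.2‖)
      ((∑' s, ‖f s‖) * ∑' s, ‖g s‖) :=
  (hf.hasSum.mul hg.hasSum (by simpa only [norm_mul] using hf.mul_norm hg)).tsum_fiberwise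
    fun x : BC × BC => x.1 * x.2

theorem norm_conv_le (hf : Summable (‖f ·‖)) (hg : Summable (‖g ·‖)) (r : BC) :
    ‖conv f g r‖ ≤ ∑' x : {x : BC × BC // x.1 * x.2 = r}, ‖f x.1.1‖ * ‖g x.1.2‖ :=
  (norm_tsum_le_tsum_norm ((hf.mul_norm hg).subtype _)).trans_eq
    (tsum_congr fun _ => norm_mul _ _)

theorem summable_norm_conv (hf : Summable (‖f ·‖)) (hg : Summable (‖g ·‖)) :
    Summable (‖conv f g ·‖) :=
  (hasSum_tsum_conv_fiber_norm hf hg).summable.of_nonneg_of_le (fun _ => norm_nonneg _)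
    (norm_conv_le hf hg)

theorem tsum_norm_conv_le (hf : Summable (‖f ·‖)) (hg : Summable (‖g ·‖)) :
    ∑' r, ‖conv f g r‖ ≤ (∑' s, ‖f s‖) * ∑' s, ‖g s‖ :=
  hasSum_le (norm_conv_le hf hg) (summable_norm_conv hf hg).hasSum
    (hasSum_tsum_conv_fiber_norm hf hg)

theorem conv_sub_left {f' : BC → ℂ} (hf : Summable (‖f ·‖)) (hf' : Summable (‖f' ·‖))
    (hg : Summable (‖g ·‖)) : conv (f - f') g = conv f g - conv f' g := by
  funext r
  simp only [conv, Pi.sub_apply, sub_mul]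
  exact (summable_conv_fiber hf hg r).tsum_sub (summable_conv_fiber hf' hg r)

theorem conv_sub_right {g' : BC → ℂ} (hf : Summable (‖f ·‖)) (hg : Summable (‖g ·‖))
    (hg' : Summable (‖g' ·‖)) : conv f (g - g') = conv f g - conv f g' := by
  funext r
  simp only [conv, Pi.sub_apply, mul_sub]
  exact (summable_conv_fiber hf hg r).tsum_sub (summable_conv_fiber hf hg' r)

end Convolution

theorem conv_delta_delta (x y : BC) : conv (delta x) (delta y) = delta (x * y) := by
  funext r
  by_cases hr : x * y = r
  · subst hr
    refine (tsum_eq_single ⟨(x, y), rfl⟩ fun z hz => ?_).trans (by simp [delta])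
    have : z.1.1 ≠ x ∨ z.1.2 ≠ y := by
      contrapose! hz; exact Subtype.ext (Prod.ext hz.1 hz.2)
    rcases this with h | h <;> simp [delta, h]
  · rw [delta, if_neg (Ne.symm hr)]
    refine (tsum_congr fun z => ?_).trans tsum_zero
    have : z.1.1 ≠ x ∨ z.1.2 ≠ y := by
      contrapose! hr; rw [← z.2, hr.1, hr.2]
    rcases this with h | h <;> simp [delta, h]

theorem conv_delta_one_right (f : BC → ℂ) : conv f (delta 1) = f := by
  funext r
  refine (tsum_eq_single ⟨(r, 1), mul_one r⟩ fun z hz => ?_).trans (by simp [delta])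
  have : z.1.2 ≠ 1 := fun h => hz (Subtype.ext (Prod.ext (by simpa [h] using z.2) h))
  simp [delta, this]

theorem conv_delta_one_left (f : BC → ℂ) : conv (delta 1) f = f := by
  funext r
  refine (tsum_eq_single ⟨(1, r), one_mul r⟩ fun z hz => ?_).trans (by simp [delta])
  have : z.1.1 ≠ 1 := fun h => hz (Subtype.ext (Prod.ext h (by simpa [h] using z.2)))
  simp [delta, this]

theorem delta_injective : Function.Injective delta := fun x y h => by
  simpa [delta] using congr_fun h x

theorem tsum_delta (x : BC) : ∑' s, delta x s = 1 := by
  simp [delta]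

theorem memL1_delta (ω : BC → ℝ) (x : BC) : MemL1 ω (delta x) :=
  summable_of_hasFiniteSupport <| (Set.finite_singleton x).subset fun s hs =>
    by_contra fun h => hs (by simp [delta, Set.mem_singleton_iff.not.mp h])

theorem summable_norm_delta (x : BC) : Summable (‖delta x ·‖) := by
  simpa [MemL1] using memL1_delta 1 x

theorem MemL1.summable_norm {ω : BC → ℝ} {f : BC → ℂ} (hω : ∀ s, 1 ≤ ω s) (hf : MemL1 ω f) :
    Summable (‖f ·‖) :=
  hf.of_nonneg_of_le (fun _ => norm_nonneg _) fun s =>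
    le_mul_of_one_le_right (norm_nonneg _) (hω s)

theorem conv_sub_delta_one_self {h : BC → ℂ} (hh : Summable (‖h ·‖)) (hidem : conv h h = h) :
    conv (h - delta 1) (h - delta 1) = -(h - delta 1) := by
  have hδ := summable_norm_delta 1
  rw [conv_sub_left hh hδ (summable_norm_sub hh hδ), conv_sub_right hh hh hδ,
    conv_sub_right hδ hh hδ, hidem, conv_delta_one_right, conv_delta_one_left,
    conv_delta_one_left]
  abel

theorem one_le_tsum_norm_of_conv_self_eq_neg {g : BC → ℂ} (hg : Summable (‖g ·‖))
    (hgg : conv g g = -g) (hg0 : g ≠ 0) : 1 ≤ ∑' s, ‖g s‖ := by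
  obtain ⟨s, hs⟩ := Function.ne_iff.mp hg0
  have hpos : 0 < ∑' s, ‖g s‖ := hg.tsum_pos (fun _ => norm_nonneg _) s (norm_pos_iff.mpr hs)
  have hsq : ∑' s, ‖g s‖ ≤ (∑' s, ‖g s‖) * ∑' s, ‖g s‖ := by
    simpa [hgg] using tsum_norm_conv_le hg hg
  exact (le_mul_iff_one_le_right hpos).mp hsq

theorem one_le_two_mul_tsum_compl_norm {h : BC → ℂ} (hh : Summable (‖h ·‖))
    (hidem : conv h h = h) (hsum : ∑' s, h s = 1) (hne : h ≠ delta 1) :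
    1 ≤ 2 * ∑' s : ({1}ᶜ : Set BC), ‖h s‖ := by
  have hg := summable_norm_sub hh (summable_norm_delta 1)
  have hN : 1 ≤ ∑' s, ‖(h - delta 1) s‖ := one_le_tsum_norm_of_conv_self_eq_neg hg
    (conv_sub_delta_one_self hh hidem) (sub_ne_zero.mpr hne)
  have hsplit : ∑' s, ‖(h - delta 1) s‖ = ‖h 1 - 1‖ + ∑' s : ({1}ᶜ : Set BC), ‖h s‖ := by
    rw [tsum_eq_add_tsum_compl_singleton hg 1]
    congr 1
    · simp [delta]
    · exact tsum_congr fun s => by simp [delta, show (s : BC) ≠ 1 from s.2]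
  have hcenter : ‖h 1 - 1‖ ≤ ∑' s : ({1}ᶜ : Set BC), ‖h s‖ := by
    rw [norm_sub_rev, ← hsum]
    exact norm_tsum_sub_le_tsum_compl_singleton hh 1
  linarith

theorem wnorm_eq_norm_add_mul_tsum_compl {n : ℕ} {ω : BC → ℝ} (hωe : ω 1 = 1)
    (hωs : ∀ s : BC, s ≠ 1 → ω s = n) {f : BC → ℂ} (hf : MemL1 ω f) :
    wnorm ω f = ‖f 1‖ + n * ∑' s : ({1}ᶜ : Set BC), ‖f s‖ := by
  rw [wnorm, tsum_eq_add_tsum_compl_singleton hf 1, hωe, mul_one, ← tsum_mul_left]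
  exact congrArg _ (tsum_congr fun s => by rw [hωs s s.2, mul_comm])

/-- For the weight `ωₙ` on `BC` with `ωₙ(e) = 1` and `ωₙ(s) = n` otherwise, the
algebra `ℓ¹(BC, ωₙ)` is Dedekind-infinite, witnessed by the idempotent
`h = δ_q ∗ δ_p ∼ δ_e`, `h ≠ δ_e`; and every idempotent `h ∼ δ_e`, `h ≠ δ_e`
satisfies `‖h‖_{ωₙ} ≥ n/2`. -/
theorem bicyclic_weighted_l1_dedekind_infinite
    (n : ℕ) (hn : 1 ≤ n) (ω : BC → ℝ)
    (hωe : ω 1 = 1) (hωs : ∀ s : BC, s ≠ 1 → ω s = n) :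
    conv (delta BC.q) (delta BC.p) = delta (BC.q * BC.p) ∧
    conv (delta (BC.q * BC.p)) (delta (BC.q * BC.p)) = delta (BC.q * BC.p) ∧
    delta (BC.q * BC.p) ≠ delta 1 ∧
    (∃ a b : BC → ℂ, MemL1 ω a ∧ MemL1 ω b ∧
      conv a b = delta 1 ∧ conv b a = delta (BC.q * BC.p)) ∧
    (∀ h : BC → ℂ, MemL1 ω h → conv h h = h → h ≠ delta 1 →
      (∃ a b : BC → ℂ, MemL1 ω a ∧ MemL1 ω b ∧
        conv a b = delta 1 ∧ conv b a = h) →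
      (n : ℝ) / 2 ≤ wnorm ω h) := by
  have hω : ∀ s, 1 ≤ ω s := fun s => by
    rcases eq_or_ne s 1 with rfl | hs
    · rw [hωe]
    · rw [hωs s hs]; exact_mod_cast hn
  refine ⟨conv_delta_delta _ _, by rw [conv_delta_delta, BC.isIdempotentElem_q_mul_p.eq],
    delta_injective.ne BC.q_mul_p_ne_one, ⟨delta BC.p, delta BC.q, memL1_delta ω _,
      memL1_delta ω _, by rw [conv_delta_delta, BC.p_mul_q], conv_delta_delta _ _⟩, ?_⟩
  rintro h hmem hidem hne ⟨a, b, ha, hb, hab, hba⟩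
  have hsum : ∑' s, h s = 1 := by
    rw [← hba, ← tsum_conv_comm (ha.summable_norm hω) (hb.summable_norm hω), hab, tsum_delta]
  have htail := one_le_two_mul_tsum_compl_norm (hmem.summable_norm hω) hidem hsum hne
  rw [wnorm_eq_norm_add_mul_tsum_compl hωe hωs hmem]
  nlinarith [norm_nonneg (h 1), n.cast_nonneg (α := ℝ)]
end

section
/- Let A be a Banach algebra containing elements a, b with ab = 1, ba ≠ 1, such that {1, ba} (more generally a bounded multiplicative sub-semigroup S containing an idempotent p ∼ 1, p ≠ 1) is bounded. Then there is an equivalent submultiplicative norm ‖·‖₀ on A with ‖1‖₀ = 1 and ‖p‖₀ = 1; hence C'_DI(A, ‖·‖₀) = 1. -/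
set_option linter.unusedSectionVars false

noncomputable def muN {A : Type*} [NormedRing A] (p x : A) : ℝ :=
  max (max ‖x‖ ‖p*x‖) (max ‖x*p‖ ‖p*x*p‖)

noncomputable def NNr {A : Type*} [NormedRing A] (p x : A) : ℝ :=
  sSup ((fun y => muN p (x*y)) '' {y | muN p y ≤ 1})

section
variable {A : Type*} [NormedRing A] [NormOneClass A] [NormedAlgebra ℂ A] (p : A)

lemma norm_le_muN (x : A) : ‖x‖ ≤ muN p x := le_max_of_le_left (le_max_left _ _)

lemma muN_nonneg (x : A) : 0 ≤ muN p x := (norm_nonneg x).trans (norm_le_muN p x)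

lemma muN_zero : muN p (0:A) = 0 := by simp [muN]

lemma muN_le (x : A) : muN p x ≤ (1+‖p‖)^2 * ‖x‖ := by
  have h0 : 0 ≤ ‖p‖ := norm_nonneg p
  have hx : 0 ≤ ‖x‖ := norm_nonneg x
  have h1 : ‖p*x‖ ≤ ‖p‖*‖x‖ := norm_mul_le _ _
  have h2 : ‖x*p‖ ≤ ‖x‖*‖p‖ := norm_mul_le _ _
  have h3 : ‖p*x*p‖ ≤ ‖p*x‖*‖p‖ := norm_mul_le _ _
  have h4 := mul_le_mul_of_nonneg_right h1 h0
  refine max_le (max_le ?_ ?_) (max_le ?_ ?_) <;>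
    nlinarith [mul_nonneg h0 hx, mul_nonneg (mul_nonneg h0 h0) hx, mul_nonneg h0 h0]

lemma muN_add (x y : A) : muN p (x+y) ≤ muN p x + muN p y := by
  have h1 : ‖x+y‖ ≤ ‖x‖ + ‖y‖ := norm_add_le _ _
  have h2 : ‖p*(x+y)‖ ≤ ‖p*x‖ + ‖p*y‖ := by rw [mul_add]; exact norm_add_le _ _
  have h3 : ‖(x+y)*p‖ ≤ ‖x*p‖ + ‖y*p‖ := by rw [add_mul]; exact norm_add_le _ _
  have h4 : ‖p*(x+y)*p‖ ≤ ‖p*x*p‖ + ‖p*y*p‖ := by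
    rw [mul_add, add_mul]; exact norm_add_le _ _
  unfold muN
  refine max_le (max_le ?_ ?_) (max_le ?_ ?_)
  · exact h1.trans (add_le_add (le_max_of_le_left (le_max_left _ _)) (le_max_of_le_left (le_max_left _ _)))
  · exact h2.trans (add_le_add (le_max_of_le_left (le_max_right _ _)) (le_max_of_le_left (le_max_right _ _)))
  · exact h3.trans (add_le_add (le_max_of_le_right (le_max_left _ _)) (le_max_of_le_right (le_max_left _ _)))
  · exact h4.trans (add_le_add (le_max_of_le_right (le_max_right _ _)) (le_max_of_le_right (le_max_right _ _)))

lemma muN_smul (c : ℂ) (x : A) : muN p (c • x) = ‖c‖ * muN p x := by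
  have e1 : p*(c•x) = c•(p*x) := mul_smul_comm c p x
  have e2 : (c•x)*p = c•(x*p) := smul_mul_assoc c x p
  have e3 : p*(c•x)*p = c•(p*x*p) := by rw [e1, smul_mul_assoc]
  unfold muN
  rw [e3, e1, e2, norm_smul, norm_smul, norm_smul, norm_smul,
    ← mul_max_of_nonneg _ _ (norm_nonneg c), ← mul_max_of_nonneg _ _ (norm_nonneg c),
    ← mul_max_of_nonneg _ _ (norm_nonneg c)]

lemma muN_p_mul (hp : p*p = p) (x : A) : muN p (p*x) ≤ muN p x := by
  have e1 : p*(p*x) = p*x := by rw [← mul_assoc, hp]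
  unfold muN
  rw [e1]
  refine max_le (max_le ?_ ?_) (max_le ?_ ?_)
  · exact le_max_of_le_left (le_max_right _ _)
  · exact le_max_of_le_left (le_max_right _ _)
  · exact le_max_of_le_right (le_max_right _ _)
  · exact le_max_of_le_right (le_max_right _ _)

lemma muN_one_pos : 0 < muN p (1:A) :=
  lt_of_lt_of_le one_pos (by simpa using norm_le_muN p 1)

lemma NNr_bddAbove (x : A) :
    BddAbove ((fun y => muN p (x*y)) '' {y | muN p y ≤ 1}) := by
  refine ⟨(1+‖p‖)^2 * ‖x‖, ?_⟩
  rintro t ⟨y, hy, rfl⟩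
  have hy1 : ‖y‖ ≤ 1 := (norm_le_muN p y).trans hy
  have hK : (0:ℝ) ≤ (1+‖p‖)^2 := by positivity
  calc muN p (x*y) ≤ (1+‖p‖)^2 * ‖x*y‖ := muN_le p _
    _ ≤ (1+‖p‖)^2 * (‖x‖*‖y‖) := by
        exact mul_le_mul_of_nonneg_left (norm_mul_le _ _) hK
    _ ≤ (1+‖p‖)^2 * (‖x‖*1) := by
        have := mul_le_mul_of_nonneg_left hy1 (norm_nonneg x)
        exact mul_le_mul_of_nonneg_left this hK
    _ = (1+‖p‖)^2 * ‖x‖ := by ring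

lemma NNr_nonempty (x : A) :
    ((fun y => muN p (x*y)) '' {y | muN p y ≤ 1}).Nonempty :=
  ⟨_, ⟨0, by simp [muN], rfl⟩⟩

lemma le_NNr {y : A} (hy : muN p y ≤ 1) (x : A) : muN p (x*y) ≤ NNr p x :=
  le_csSup (NNr_bddAbove p x) ⟨y, hy, rfl⟩

lemma NNr_le {x : A} {c : ℝ} (h : ∀ y, muN p y ≤ 1 → muN p (x*y) ≤ c) :
    NNr p x ≤ c := by
  refine csSup_le (NNr_nonempty p x) ?_
  rintro t ⟨y, hy, rfl⟩
  exact h y hy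

lemma NNr_nonneg (x : A) : 0 ≤ NNr p x := by
  have := le_NNr p (y := 0) (by simp [muN]) x
  simpa [muN] using this

lemma muN_mul_le (x w : A) : muN p (x*w) ≤ NNr p x * muN p w := by
  by_cases hw : w = 0
  · simp [hw, muN]
  · have hwpos : 0 < muN p w :=
      lt_of_lt_of_le (norm_pos_iff.mpr hw) (norm_le_muN p w)
    set r : ℝ := muN p w
    have hnorm : ‖(((r⁻¹ : ℝ) : ℂ))‖ = r⁻¹ := by
      rw [Complex.norm_real, Real.norm_eq_abs, abs_of_pos (inv_pos.mpr hwpos)]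
    have hmu : muN p (((r⁻¹ : ℝ) : ℂ) • w) = 1 := by
      rw [muN_smul, hnorm, inv_mul_cancel₀ hwpos.ne']
    have hle := le_NNr p hmu.le x
    have e : x * (((r⁻¹ : ℝ) : ℂ) • w) = ((r⁻¹ : ℝ) : ℂ) • (x*w) := mul_smul_comm _ _ _
    rw [e, muN_smul, hnorm] at hle
    have : r⁻¹ * muN p (x*w) ≤ NNr p x := hle
    calc muN p (x*w) = r * (r⁻¹ * muN p (x*w)) := by
          field_simp
      _ ≤ r * NNr p x := mul_le_mul_of_nonneg_left this hwpos.le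
      _ = NNr p x * r := mul_comm _ _

lemma NNr_mul (x y : A) : NNr p (x*y) ≤ NNr p x * NNr p y := by
  refine NNr_le p (fun z hz => ?_)
  have h1 : muN p (x*(y*z)) ≤ NNr p x * muN p (y*z) := muN_mul_le p x (y*z)
  have h2 : muN p (y*z) ≤ NNr p y := le_NNr p hz y
  calc muN p (x*y*z) = muN p (x*(y*z)) := by rw [mul_assoc]
    _ ≤ NNr p x * muN p (y*z) := h1
    _ ≤ NNr p x * NNr p y := mul_le_mul_of_nonneg_left h2 (NNr_nonneg p x)

lemma NNr_add (x y : A) : NNr p (x+y) ≤ NNr p x + NNr p y := by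
  refine NNr_le p (fun z hz => ?_)
  calc muN p ((x+y)*z) = muN p (x*z + y*z) := by rw [add_mul]
    _ ≤ muN p (x*z) + muN p (y*z) := muN_add p _ _
    _ ≤ NNr p x + NNr p y := add_le_add (le_NNr p hz x) (le_NNr p hz y)

lemma NNr_smul_le (c : ℂ) (x : A) : NNr p (c•x) ≤ ‖c‖ * NNr p x := by
  refine NNr_le p (fun z hz => ?_)
  have e : (c•x)*z = c•(x*z) := smul_mul_assoc c x z
  rw [e, muN_smul]
  exact mul_le_mul_of_nonneg_left (le_NNr p hz x) (norm_nonneg c)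

lemma NNr_smul (c : ℂ) (x : A) : NNr p (c•x) = ‖c‖ * NNr p x := by
  by_cases hc : c = 0
  · subst hc
    simp only [zero_smul, norm_zero, zero_mul]
    refine le_antisymm (NNr_le p (fun z hz => by simp [muN])) (NNr_nonneg p 0)
  · refine le_antisymm (NNr_smul_le p c x) ?_
    have h := NNr_smul_le p c⁻¹ (c•x)
    rw [smul_smul, inv_mul_cancel₀ hc, one_smul, norm_inv] at h
    calc ‖c‖ * NNr p x ≤ ‖c‖ * (‖c‖⁻¹ * NNr p (c•x)) :=
          mul_le_mul_of_nonneg_left h (norm_nonneg c)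
      _ = NNr p (c•x) := by
          rw [← mul_assoc, mul_inv_cancel₀ (norm_ne_zero_iff.mpr hc), one_mul]

lemma norm_le_NNr (x : A) : (muN p (1:A))⁻¹ * ‖x‖ ≤ NNr p x := by
  set r : ℝ := muN p (1:A)
  have hr : 0 < r := muN_one_pos p
  have hnorm : ‖(((r⁻¹ : ℝ) : ℂ))‖ = r⁻¹ := by
    rw [Complex.norm_real, Real.norm_eq_abs, abs_of_pos (inv_pos.mpr hr)]
  have hmu : muN p (((r⁻¹ : ℝ) : ℂ) • (1:A)) = 1 := by
    rw [muN_smul, hnorm, inv_mul_cancel₀ hr.ne']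
  have hle := le_NNr p hmu.le x
  have e : x * (((r⁻¹ : ℝ) : ℂ) • (1:A)) = ((r⁻¹ : ℝ) : ℂ) • x := by
    rw [mul_smul_comm, mul_one]
  rw [e, muN_smul, hnorm] at hle
  have h2 : r⁻¹ * muN p x ≤ NNr p x := hle
  calc r⁻¹ * ‖x‖ ≤ r⁻¹ * muN p x :=
        mul_le_mul_of_nonneg_left (norm_le_muN p x) (inv_pos.mpr hr).le
    _ ≤ NNr p x := h2

lemma NNr_le_norm (x : A) : NNr p x ≤ (1+‖p‖)^2 * ‖x‖ := by
  refine NNr_le p (fun y hy => ?_)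
  have hy1 : ‖y‖ ≤ 1 := (norm_le_muN p y).trans hy
  have hK : (0:ℝ) ≤ (1+‖p‖)^2 := by positivity
  calc muN p (x*y) ≤ (1+‖p‖)^2 * ‖x*y‖ := muN_le p _
    _ ≤ (1+‖p‖)^2 * (‖x‖*‖y‖) := mul_le_mul_of_nonneg_left (norm_mul_le _ _) hK
    _ ≤ (1+‖p‖)^2 * (‖x‖*1) := by
        exact mul_le_mul_of_nonneg_left
          (mul_le_mul_of_nonneg_left hy1 (norm_nonneg x)) hK
    _ = (1+‖p‖)^2 * ‖x‖ := by ring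

lemma NNr_one : NNr p (1:A) = 1 := by
  refine le_antisymm (NNr_le p (fun y hy => by simpa using hy)) ?_
  set r : ℝ := muN p (1:A)
  have hr : 0 < r := muN_one_pos p
  have hnorm : ‖(((r⁻¹ : ℝ) : ℂ))‖ = r⁻¹ := by
    rw [Complex.norm_real, Real.norm_eq_abs, abs_of_pos (inv_pos.mpr hr)]
  have hmu : muN p (((r⁻¹ : ℝ) : ℂ) • (1:A)) = 1 := by
    rw [muN_smul, hnorm, inv_mul_cancel₀ hr.ne']
  have := le_NNr p hmu.le 1
  rwa [one_mul, hmu] at this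

lemma NNr_idem_ge_one {r : A} (hr : r*r = r) (hr0 : r ≠ 0) : 1 ≤ NNr p r := by
  have hpos : 0 < NNr p r := by
    have h1 : 0 < ‖r‖ := norm_pos_iff.mpr hr0
    have h2 := norm_le_NNr p r
    have h3 : 0 < (muN p (1:A))⁻¹ * ‖r‖ :=
      mul_pos (inv_pos.mpr (muN_one_pos p)) h1
    linarith
  have h := NNr_mul p r r
  rw [hr] at h
  nlinarith

lemma NNr_p (hp : p*p = p) (hp0 : p ≠ 0) : NNr p p = 1 := by
  refine le_antisymm (NNr_le p (fun y hy => (muN_p_mul p hp (y)).trans hy)) ?_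
  exact NNr_idem_ge_one p hp hp0

end

/-- If `ab = 1` and `ba ≠ 1` in a unital Banach algebra, there is an equivalent
submultiplicative norm `N` with `N 1 = 1` and `N (ba) = 1`; consequently
`C'_DI(A, N) = 1`. -/
theorem renorm_CprimeDI_eq_one {A : Type*} [NormedRing A] [NormOneClass A]
    [CompleteSpace A] [NormedAlgebra ℂ A]
    (a b : A) (hab : a * b = 1) (hba : b * a ≠ 1) :
    ∃ N : A → ℝ,
      (∀ x y : A, N (x + y) ≤ N x + N y) ∧
      (∀ (c : ℂ) (x : A), N (c • x) = ‖c‖ * N x) ∧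
      (∀ x y : A, N (x * y) ≤ N x * N y) ∧
      (∃ c C : ℝ, 0 < c ∧ 0 < C ∧ ∀ x : A, c * ‖x‖ ≤ N x ∧ N x ≤ C * ‖x‖) ∧
      N 1 = 1 ∧ N (b * a) = 1 ∧
      sInf {t : ℝ | ∃ r : A, r * r = r ∧ (∃ u v : A, u * v = 1 ∧ v * u = r) ∧
        r ≠ 1 ∧ t = N r} = 1 := by
  set p : A := b * a with hpdef
  have hone : (1:A) ≠ 0 := by
    intro h
    have : ‖(1:A)‖ = 0 := by rw [h, norm_zero]
    rw [norm_one] at this; norm_num at this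
  have hp : p * p = p := by
    rw [hpdef, mul_assoc, ← mul_assoc a b, hab, one_mul]
  have hp0 : p ≠ 0 := by
    intro h
    apply hone
    have h1 : a*p*b = 1 := by rw [hpdef, ← mul_assoc, hab, one_mul, hab]
    rw [h, mul_zero, zero_mul] at h1
    exact h1.symm
  refine ⟨NNr p, NNr_add p, NNr_smul p, NNr_mul p, ?_, NNr_one p, NNr_p p hp hp0, ?_⟩
  · refine ⟨(muN p (1:A))⁻¹, (1+‖p‖)^2, inv_pos.mpr (muN_one_pos p), by positivity,
      fun x => ⟨norm_le_NNr p x, NNr_le_norm p x⟩⟩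
  · have hmem : (1:ℝ) ∈ {t : ℝ | ∃ r : A, r * r = r ∧ (∃ u v : A, u * v = 1 ∧ v * u = r) ∧
        r ≠ 1 ∧ t = NNr p r} :=
      ⟨p, hp, ⟨a, b, hab, rfl⟩, hba, (NNr_p p hp hp0).symm⟩
    have hlb : ∀ t ∈ {t : ℝ | ∃ r : A, r * r = r ∧ (∃ u v : A, u * v = 1 ∧ v * u = r) ∧
        r ≠ 1 ∧ t = NNr p r}, (1:ℝ) ≤ t := by
      rintro t ⟨r, hr, ⟨u, v, huv, hvu⟩, hrne, rfl⟩
      have hr0 : r ≠ 0 := by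
        intro h
        apply hone
        have h1 : u*r*v = 1 := by rw [← hvu, ← mul_assoc, huv, one_mul, huv]
        rw [h, mul_zero, zero_mul] at h1
        exact h1.symm
      exact NNr_idem_ge_one p hr hr0
    exact le_antisymm (csInf_le ⟨1, hlb⟩ hmem) (le_csInf ⟨1, hmem⟩ hlb)
end

section
/- Let A be a unital Banach algebra and J a closed two-sided ideal with quotient map π: A → A/J. Suppose both J̃ := ℂ1 + J and A/J have stable rank one, and that π(inv(A)) = inv(A/J). Then A has stable rank one. -/
/-- Stable rank one as a "three space property": if `J̃ = ℂ1 + J` and `A/J` have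
stable rank one and invertibles lift from `A/J` to `A`, then `A` has stable rank
one. All conditions on `A/J` are phrased inside `A` via the quotient map. -/
theorem stableRankOne_three_space
    {A : Type*} [NormedRing A] [NormOneClass A] [CompleteSpace A] [NormedAlgebra ℂ A]
    (J : TwoSidedIdeal A) (hJclosed : IsClosed (J : Set A))
    -- `J̃ = ℂ1 + J` has stable rank one (`inv(J̃) = inv(A) ∩ J̃`):
    (hJt : ∀ x ∈ {x : A | ∃ (c : ℂ) (y : A), y ∈ J ∧ x = c • 1 + y}, ∀ ε > (0 : ℝ),
      ∃ u ∈ {x : A | ∃ (c : ℂ) (y : A), y ∈ J ∧ x = c • 1 + y},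
        IsUnit u ∧ ‖x - u‖ < ε)
    -- `A/J` has stable rank one:
    (hQ : ∀ a : A, ∀ ε > (0 : ℝ), ∃ b j : A,
      (∃ c : A, b * c - 1 ∈ J ∧ c * b - 1 ∈ J) ∧ j ∈ J ∧ ‖a - b - j‖ < ε)
    -- invertibles of `A/J` lift to invertibles of `A`:
    (hlift : ∀ b : A, (∃ c : A, b * c - 1 ∈ J ∧ c * b - 1 ∈ J) →
      ∃ u : A, IsUnit u ∧ b - u ∈ J) :
    ∀ a : A, ∀ ε > (0 : ℝ), ∃ u : A, IsUnit u ∧ ‖a - u‖ < ε := by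
  intro a ε hε
  obtain ⟨b, j, hb, hjJ, hab⟩ := hQ a (ε / 2) (by positivity)
  obtain ⟨u, hu, hbu⟩ := hlift b hb
  obtain ⟨U, rfl⟩ := hu
  set k : A := (b - ↑U) + j with hk
  have hkJ : k ∈ J := J.add_mem hbu hjJ
  have : Nontrivial A := nontrivial_of_ne 1 0
    (fun h => by simpa [h] using (norm_one : ‖(1 : A)‖ = 1))
  have hU0 : (U : A) ≠ 0 := U.ne_zero
  have hUpos : (0 : ℝ) < ‖(U : A)‖ := norm_pos_iff.mpr hU0
  have hmem : (1 + ↑U⁻¹ * k) ∈ {x : A | ∃ (c : ℂ) (y : A), y ∈ J ∧ x = c • 1 + y} :=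
    ⟨1, ↑U⁻¹ * k, J.mul_mem_left _ _ hkJ, by simp⟩
  obtain ⟨w, -, hwu, hww⟩ := hJt _ hmem (ε / (2 * ‖(U : A)‖)) (by positivity)
  refine ⟨↑U * w, (Units.isUnit U).mul hwu, ?_⟩
  have key : a - ↑U * w = (a - b - j) + ↑U * ((1 + ↑U⁻¹ * k) - w) := by
    rw [mul_sub, mul_add, mul_one, ← mul_assoc, U.mul_inv, one_mul, hk]
    abel
  rw [key]
  calc ‖(a - b - j) + ↑U * ((1 + ↑U⁻¹ * k) - w)‖
      ≤ ‖a - b - j‖ + ‖(U : A)‖ * ‖(1 + ↑U⁻¹ * k) - w‖ :=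
        (norm_add_le _ _).trans (by gcongr; exact norm_mul_le _ _)
    _ < ε / 2 + ‖(U : A)‖ * (ε / (2 * ‖(U : A)‖)) := by gcongr
    _ = ε := by field_simp; ring
end
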